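/- Assume the p=3 parasupersymmetry algebra, with Q₁ = (Q† + Q)/(2√3) and Q₂ = (Q† − Q)/(2√3·i). Let Ψ ≠ 0 satisfy Q₁Ψ = q₁Ψ and HΨ = EΨ (q₁, E ∈ ℝ, using that Q₁ and H are self-adjoint). If (q₁²·I − Q₂²)Ψ ≠ 0, then E ≥ 0. -/

import Mathlib

open ContinuousLinearMap

/-- The hermitian parasupercharge `Q₁ = (Q† + Q)/(2√3)`. -/
noncomputable def hermQ1 {𝓗 : Type*} [NormedAddCommGroup 𝓗] [InnerProductSpace ℂ 𝓗]
    [CompleteSpace 𝓗] (Q : 𝓗 →L[ℂ] 𝓗) : 𝓗 →L[ℂ] 𝓗 :=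
  ((2 * Real.sqrt 3 : ℝ) : ℂ)⁻¹ • (adjoint Q + Q)

/-- The hermitian parasupercharge `Q₂ = (Q† − Q)/(2√3·i)`. -/
noncomputable def hermQ2 {𝓗 : Type*} [NormedAddCommGroup 𝓗] [InnerProductSpace ℂ 𝓗]
    [CompleteSpace 𝓗] (Q : 𝓗 →L[ℂ] 𝓗) : 𝓗 →L[ℂ] 𝓗 :=
  (((2 * Real.sqrt 3 : ℝ) : ℂ) * Complex.I)⁻¹ • (adjoint Q - Q)

/-!
With `X = Q† + Q` and `Y = Q† − Q`, the words of odd degree in `Q` in the expansion of `X⁴ − Y⁴`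
are exactly the left-hand sides of (ii) and (iv), so `X⁴ − Y⁴ = 6 (X² + Y²) H`; rescaled, this is
`Q₁⁴ − Q₂⁴ = (Q₁² − Q₂²) H/2`. Applied to `Ψ`, and writing `Φ = (q₁² − Q₂²) Ψ = (Q₁² − Q₂²) Ψ`,
it gives `(E/2) Φ = q₁² Φ + Q₂² Φ`. Pairing with `Φ` and using that `Q₂` is self-adjoint,
`(E/2) ‖Φ‖² = q₁² ‖Φ‖² + ‖Q₂ Φ‖² ≥ 0`, and `Φ ≠ 0`.
-/

theorem add_pow_four_sub_sub_pow_four {R : Type*} [Ring R] (a b : R) :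
    (a + b) ^ 4 - (a - b) ^ 4 =
      2 * (b ^ 3 * a + b ^ 2 * a * b + b * a * b ^ 2 + a * b ^ 3)
        + 2 * (a ^ 3 * b + a ^ 2 * b * a + a * b * a ^ 2 + b * a ^ 3) := by
  noncomm_ring

theorem add_sq_add_sub_sq {R : Type*} [Ring R] (a b : R) :
    (a + b) ^ 2 + (a - b) ^ 2 = 2 * (a ^ 2 + b ^ 2) := by
  noncomm_ring

section EigenvectorAlgebra

variable {R M : Type*} [TopologicalSpace M]

theorem pow_apply_of_apply_eq_smul [CommSemiring R] [AddCommMonoid M] [Module R M]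
    {A : M →L[R] M} {Ψ : M} {a : R} (hA : A Ψ = a • Ψ) (n : ℕ) :
    (A ^ n) Ψ = a ^ n • Ψ := by
  induction n with
  | zero => simp
  | succ n ih => rw [pow_succ', mul_apply_eq_comp, ih, map_smul, hA, smul_smul, ← pow_succ]

theorem smul_sq_smul_sub_pow_two_apply [CommRing R] [AddCommGroup M] [IsTopologicalAddGroup M]
    [Module R M] [ContinuousConstSMul R M] {A B K : M →L[R] M}
    (hAB : A ^ 4 - B ^ 4 = (A ^ 2 - B ^ 2) * K) {Ψ : M} {a k : R} (hA : A Ψ = a • Ψ)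
    (hK : K Ψ = k • Ψ) :
    k • (a ^ 2 • Ψ - (B ^ 2) Ψ)
      = a ^ 2 • (a ^ 2 • Ψ - (B ^ 2) Ψ) + (B ^ 2) (a ^ 2 • Ψ - (B ^ 2) Ψ) := by
  calc k • (a ^ 2 • Ψ - (B ^ 2) Ψ) = (A ^ 4 - B ^ 4) Ψ := by
        rw [hAB, mul_apply_eq_comp, hK, map_smul, sub_apply, pow_apply_of_apply_eq_smul hA]
    _ = a ^ 2 • (a ^ 2 • Ψ - (B ^ 2) Ψ) + (B ^ 2) (a ^ 2 • Ψ - (B ^ 2) Ψ) := by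
        rw [sub_apply, pow_apply_of_apply_eq_smul hA, map_sub, map_smul, ← mul_apply_eq_comp,
          ← pow_add]
        module

end EigenvectorAlgebra

theorem le_of_smul_eq_smul_add_pow_two_apply {𝕜 E : Type*} [RCLike 𝕜] [NormedAddCommGroup E]
    [InnerProductSpace 𝕜 E] [CompleteSpace E] {B : E →L[𝕜] E} (hB : IsSelfAdjoint B)
    {Φ : E} (hΦ : Φ ≠ 0) {c e : ℝ} (h : (e : 𝕜) • Φ = (c : 𝕜) • Φ + (B ^ 2) Φ) : c ≤ e := by
  have hinner : (e : 𝕜) * inner 𝕜 Φ Φ = c * inner 𝕜 Φ Φ + inner 𝕜 (B Φ) (B Φ) := by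
    rw [← inner_smul_right, h, inner_add_right, inner_smul_right, pow_two, mul_apply_eq_comp,
      ← coe_coe, hB.isSymmetric]
  have hnorm : e * ‖Φ‖ ^ 2 = c * ‖Φ‖ ^ 2 + ‖B Φ‖ ^ 2 := by
    simpa only [map_add, RCLike.re_ofReal_mul, inner_self_eq_norm_sq]
      using congrArg RCLike.re hinner
  have hΦpos : 0 < ‖Φ‖ ^ 2 := by positivity
  nlinarith [sq_nonneg ‖B Φ‖]

section Parasupersymmetry

variable {𝓗 : Type*} [NormedAddCommGroup 𝓗] [InnerProductSpace ℂ 𝓗] [CompleteSpace 𝓗]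

theorem hermQ1_sq (Q : 𝓗 →L[ℂ] 𝓗) : hermQ1 Q ^ 2 = (12 : ℂ)⁻¹ • (adjoint Q + Q) ^ 2 := by
  rw [hermQ1, smul_pow, inv_pow]
  congr
  norm_cast
  rw [mul_pow, Real.sq_sqrt (by norm_num)]
  norm_num

theorem hermQ2_sq (Q : 𝓗 →L[ℂ] 𝓗) : hermQ2 Q ^ 2 = -(12 : ℂ)⁻¹ • (adjoint Q - Q) ^ 2 := by
  rw [hermQ2, smul_pow, inv_pow, ← inv_neg]
  congr
  rw [mul_pow, Complex.I_sq]
  norm_cast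
  rw [mul_pow, Real.sq_sqrt (by norm_num)]
  norm_num

theorem hermQ1_pow_four (Q : 𝓗 →L[ℂ] 𝓗) :
    hermQ1 Q ^ 4 = (144 : ℂ)⁻¹ • (adjoint Q + Q) ^ 4 := by
  rw [show 4 = 2 * 2 from rfl, pow_mul, hermQ1_sq, smul_pow, ← pow_mul]
  norm_num

theorem hermQ2_pow_four (Q : 𝓗 →L[ℂ] 𝓗) :
    hermQ2 Q ^ 4 = (144 : ℂ)⁻¹ • (adjoint Q - Q) ^ 4 := by
  rw [show 4 = 2 * 2 from rfl, pow_mul, hermQ2_sq, smul_pow, ← pow_mul]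
  norm_num

theorem hermQ2_isSelfAdjoint (Q : 𝓗 →L[ℂ] 𝓗) : IsSelfAdjoint (hermQ2 Q) := by
  have hconj : star ((((2 * Real.sqrt 3 : ℝ) : ℂ) * Complex.I)⁻¹)
      = -(((2 * Real.sqrt 3 : ℝ) : ℂ) * Complex.I)⁻¹ := by
    rw [star_inv₀, star_mul', Complex.star_def, Complex.conj_I, Complex.conj_ofReal, mul_neg,
      inv_neg]
  rw [IsSelfAdjoint, hermQ2, star_smul, star_sub, star_eq_adjoint, star_eq_adjoint,
    adjoint_adjoint, hconj, neg_smul, ← smul_neg, neg_sub]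

theorem hermQ1_pow_four_sub_hermQ2_pow_four {Q H : 𝓗 →L[ℂ] 𝓗}
    (hii : Q ^ 3 * adjoint Q + Q ^ 2 * adjoint Q * Q + Q * adjoint Q * Q ^ 2
      + adjoint Q * Q ^ 3 = 6 * (Q ^ 2 * H))
    (hiv : (adjoint Q) ^ 3 * Q + (adjoint Q) ^ 2 * Q * adjoint Q
      + adjoint Q * Q * (adjoint Q) ^ 2 + Q * (adjoint Q) ^ 3 = 6 * ((adjoint Q) ^ 2 * H)) :
    hermQ1 Q ^ 4 - hermQ2 Q ^ 4 = (hermQ1 Q ^ 2 - hermQ2 Q ^ 2) * ((2⁻¹ : ℂ) • H) := by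
  have hXY : (adjoint Q + Q) ^ 4 - (adjoint Q - Q) ^ 4
      = (6 : ℂ) • (((adjoint Q + Q) ^ 2 + (adjoint Q - Q) ^ 2) * H) := by
    rw [add_pow_four_sub_sub_pow_four, hii, hiv, add_sq_add_sub_sq, ofNat_smul_eq_nsmul,
      nsmul_eq_mul]
    push_cast
    noncomm_ring
  rw [hermQ1_pow_four, hermQ2_pow_four, hermQ1_sq, hermQ2_sq, ← smul_sub, hXY, neg_smul,
    sub_neg_eq_add, ← smul_add, smul_mul_smul, smul_smul]
  norm_num

end Parasupersymmetry

theorem stmt11_general {𝓗 : Type*} [NormedAddCommGroup 𝓗] [InnerProductSpace ℂ 𝓗] [CompleteSpace 𝓗]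
    (Q H : 𝓗 →L[ℂ] 𝓗)
    (hii : Q ^ 3 * adjoint Q + Q ^ 2 * adjoint Q * Q + Q * adjoint Q * Q ^ 2
      + adjoint Q * Q ^ 3 = 6 * (Q ^ 2 * H))
    (hiv : (adjoint Q) ^ 3 * Q + (adjoint Q) ^ 2 * Q * adjoint Q
      + adjoint Q * Q * (adjoint Q) ^ 2 + Q * (adjoint Q) ^ 3 = 6 * ((adjoint Q) ^ 2 * H))
    (Ψ : 𝓗) (q₁ E : ℝ)
    (hq₁ : hermQ1 Q Ψ = (q₁ : ℂ) • Ψ)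
    (hE : H Ψ = (E : ℂ) • Ψ)
    (hker : ((q₁ : ℂ) ^ 2 • (1 : 𝓗 →L[ℂ] 𝓗) - (hermQ2 Q) ^ 2) Ψ ≠ 0) :
    0 ≤ E := by
  have hHalf : ((2⁻¹ : ℂ) • H) Ψ = ((E / 2 : ℝ) : ℂ) • Ψ := by
    rw [smul_apply, hE, smul_smul]
    push_cast
    ring_nf
  have hΦ := smul_sq_smul_sub_pow_two_apply (hermQ1_pow_four_sub_hermQ2_pow_four hii hiv) hq₁ hHalf
  rw [sub_apply, smul_apply, one_apply_eq_self] at hker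
  have hq₁E : q₁ ^ 2 ≤ E / 2 :=
    le_of_smul_eq_smul_add_pow_two_apply (hermQ2_isSelfAdjoint Q) hker (by exact_mod_cast hΦ)
  linarith [sq_nonneg q₁]

/-- Assuming the p=3 parasupersymmetry algebra, if `Ψ ≠ 0` satisfies
`Q₁Ψ = q₁Ψ` and `HΨ = EΨ`, and `(q₁²·I − Q₂²)Ψ ≠ 0`, then `E ≥ 0`. -/
theorem stmt11 {𝓗 : Type*} [NormedAddCommGroup 𝓗] [InnerProductSpace ℂ 𝓗] [CompleteSpace 𝓗]
    (Q H : 𝓗 →L[ℂ] 𝓗) (hH : IsSelfAdjoint H)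
    (hQH : Q * H = H * Q) (hQdH : adjoint Q * H = H * adjoint Q)
    (hii : Q ^ 3 * adjoint Q + Q ^ 2 * adjoint Q * Q + Q * adjoint Q * Q ^ 2
      + adjoint Q * Q ^ 3 = 6 * (Q ^ 2 * H))
    (hiii : Q * (adjoint Q) ^ 2 * Q = adjoint Q * Q ^ 2 * adjoint Q)
    (hiv : (adjoint Q) ^ 3 * Q + (adjoint Q) ^ 2 * Q * adjoint Q
      + adjoint Q * Q * (adjoint Q) ^ 2 + Q * (adjoint Q) ^ 3 = 6 * ((adjoint Q) ^ 2 * H))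
    (hQ4 : Q ^ 4 = 0) (hQd4 : (adjoint Q) ^ 4 = 0)
    (Ψ : 𝓗) (hΨ : Ψ ≠ 0) (q₁ E : ℝ)
    (hq₁ : hermQ1 Q Ψ = (q₁ : ℂ) • Ψ)
    (hE : H Ψ = (E : ℂ) • Ψ)
    (hker : ((q₁ : ℂ) ^ 2 • (1 : 𝓗 →L[ℂ] 𝓗) - (hermQ2 Q) ^ 2) Ψ ≠ 0) :
    0 ≤ E :=
  stmt11_general Q H hii hiv Ψ q₁ E hq₁ hE hker
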